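/- arXiv:1212.1434 — 6 statements merged into one kernel-verified Lean document; each statement's English description precedes it below -/
import Mathlib

section
/- A torsion-free group whose center has finite index is abelian. -/
/-! The transfer `G →* center G` is `g ↦ g ^ [G : Z(G)]`; as a homomorphism into an abelian
group it kills commutators, so every commutator is torsion, hence trivial in a torsion-free
group. -/

open Subgroup
open scoped commutatorElement

/-- A monoid is torsion-free if no nontrivial elements have finite order
(the definition removed from Mathlib, restored with its old meaning). -/
def Monoid.IsTorsionFree (G : Type*) [Monoid G] : Prop :=
  ∀ g : G, g ≠ 1 → ¬IsOfFinOrder g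

theorem Monoid.IsTorsionFree.eq_one_of_pow_eq_one {M : Type*} [Monoid M]
    (hM : Monoid.IsTorsionFree M) {x : M} {n : ℕ} (hn : n ≠ 0) (hx : x ^ n = 1) : x = 1 := by
  by_contra hne
  exact hM x hne (isOfFinOrder_iff_pow_eq_one.mpr ⟨n, Nat.pos_of_ne_zero hn, hx⟩)

theorem commutatorElement_pow_index_center_eq_one {G : Type*} [Group G] [FiniteIndex (center G)]
    (a b : G) : ⁅a, b⁆ ^ (center G).index = 1 := by
  rw [← MonoidHom.transferCenterPow_apply, OneMemClass.coe_eq_one, map_commutatorElement,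
    commutatorElement_eq_one_iff_mul_comm]
  exact Subtype.ext (mem_center_iff.mp (MonoidHom.transferCenterPow G b).2 _)

/-- A torsion-free group whose center has finite index is abelian. -/
theorem stmt3 {G : Type*} [Group G] (htf : Monoid.IsTorsionFree G)
    (hZ : (Subgroup.center G).FiniteIndex) :
    ∀ a b : G, a * b = b * a := fun a b =>
  commutatorElement_eq_one_iff_mul_comm.mp <|
    htf.eq_one_of_pow_eq_one hZ.index_ne_zero (commutatorElement_pow_index_center_eq_one a b)
end

section
/- Every torsion-free virtually cyclic group is cyclic (i.e., trivial or infinite cyclic). -/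
/-!
The normal core `N` of the cyclic subgroup is again cyclic, normal and of finite index; let `z`
generate it. Conjugation by `g` fixes `g ^ [G : N] = z ^ q`, so `g z g⁻¹` and `z` are commuting
`q`-th roots of the same element of `N`, and torsion-freeness makes them equal (if `q = 0`, then
`g = 1`). Hence `N` is central and the center has finite index. The transfer
`g ↦ g ^ [G : Z(G)]` into the center is then injective, so `G` is abelian, and `g ↦ g ^ [G : N]`
embeds `G` into the cyclic group `N`.
-/

open Subgroup

section TorsionFree

variable {G : Type*} [Group G]

lemma eq_one_of_pow_eq_one_of_torsionFree (htf : ∀ g : G, g ≠ 1 → ¬IsOfFinOrder g) {g : G}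
    {n : ℕ} (hn : n ≠ 0) (h : g ^ n = 1) : g = 1 :=
  by_contra fun hg => htf g hg (isOfFinOrder_iff_pow_eq_one.mpr ⟨n, Nat.pos_of_ne_zero hn, h⟩)

lemma eq_one_of_zpow_eq_one_of_torsionFree (htf : ∀ g : G, g ≠ 1 → ¬IsOfFinOrder g) {g : G}
    {n : ℤ} (hn : n ≠ 0) (h : g ^ n = 1) : g = 1 :=
  by_contra fun hg => htf g hg (isOfFinOrder_iff_zpow_eq_one.mpr ⟨n, hn, h⟩)

lemma Subgroup.le_center_of_isCyclic_of_torsionFree (htf : ∀ g : G, g ≠ 1 → ¬IsOfFinOrder g)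
    (N : Subgroup G) [N.Normal] [IsCyclic N] [N.FiniteIndex] : N ≤ center G := by
  obtain ⟨z, rfl⟩ := N.isCyclic_iff_exists_zpowers_eq_top.mp ‹_›
  refine zpowers_le.mpr (mem_center_iff.mpr fun g => ?_)
  obtain ⟨q, hq⟩ := mem_zpowers_iff.mp ((zpowers z).pow_index_mem g)
  obtain ⟨a, ha⟩ := mem_zpowers_iff.mp (‹(zpowers z).Normal›.conj_mem z (mem_zpowers z) g)
  rcases eq_or_ne q 0 with rfl | hq0
  · have hg : g = 1 := eq_one_of_pow_eq_one_of_torsionFree htf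
      (zpowers z).index_ne_zero_of_finite (by simpa using hq.symm)
    simp [hg]
  have hroot : (z ^ a) ^ q = z ^ q := by
    rw [ha, conj_zpow, hq]
    group
  have hquot : (z ^ a * z⁻¹) ^ q = 1 := by
    rw [((Commute.refl z).zpow_left a).inv_right.mul_zpow, hroot, inv_zpow, mul_inv_cancel]
  have hconj : g * z * g⁻¹ = z := by
    rw [← ha, ← mul_inv_eq_one]
    exact eq_one_of_zpow_eq_one_of_torsionFree htf hq0 hquot
  exact mul_inv_eq_iff_eq_mul.mp hconj

lemma MonoidHom.injective_transferCenterPow_of_torsionFree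
    (htf : ∀ g : G, g ≠ 1 → ¬IsOfFinOrder g) [(center G).FiniteIndex] :
    Function.Injective (transferCenterPow G) := by
  refine (injective_iff_map_eq_one _).mpr fun g hg => ?_
  refine eq_one_of_pow_eq_one_of_torsionFree htf (center G).index_ne_zero_of_finite ?_
  rw [← transferCenterPow_apply, hg, OneMemClass.coe_one]

lemma mul_comm_of_finiteIndex_center_of_torsionFree (htf : ∀ g : G, g ≠ 1 → ¬IsOfFinOrder g)
    [(center G).FiniteIndex] (a b : G) : a * b = b * a :=
  MonoidHom.injective_transferCenterPow_of_torsionFree htf <| by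
    rw [map_mul, map_mul]
    exact Subtype.ext (mem_center_iff.mp (MonoidHom.transferCenterPow G b).2 _)

end TorsionFree

lemma CommGroup.isCyclic_of_torsionFree_of_finiteIndex {G : Type*} [CommGroup G]
    (htf : ∀ g : G, g ≠ 1 → ¬IsOfFinOrder g) (N : Subgroup G) [IsCyclic N] [N.FiniteIndex] :
    IsCyclic G := by
  refine isCyclic_of_injective ((powMonoidHom N.index).codRestrict N N.pow_index_mem)
    ((injective_iff_map_eq_one _).mpr fun g hg => ?_)
  exact eq_one_of_pow_eq_one_of_torsionFree htf N.index_ne_zero_of_finite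
    (Subtype.ext_iff.mp hg)

lemma isCyclic_of_torsionFree_of_finiteIndex {G : Type*} [Group G]
    (htf : ∀ g : G, g ≠ 1 → ¬IsOfFinOrder g) (C : Subgroup G) [IsCyclic C] [C.FiniteIndex] :
    IsCyclic G := by
  have : IsCyclic C.normalCore := isCyclic_of_le C.normalCore_le
  have : (center G).FiniteIndex :=
    finiteIndex_of_le (C.normalCore.le_center_of_isCyclic_of_torsionFree htf)
  let _ : CommGroup G := { mul_comm := mul_comm_of_finiteIndex_center_of_torsionFree htf }
  exact CommGroup.isCyclic_of_torsionFree_of_finiteIndex htf C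

/-- A torsion-free virtually cyclic group is trivial or infinite cyclic. -/
theorem stmt5 {G : Type*} [Group G] (htf : ∀ g : G, g ≠ 1 → ¬IsOfFinOrder g)
    (hvc : ∃ C : Subgroup G, IsCyclic C ∧ C.FiniteIndex) :
    Subsingleton G ∨ Nonempty (G ≃* Multiplicative ℤ) := by
  obtain ⟨C, _, _⟩ := hvc
  rcases finite_or_infinite G with _ | _
  · have h1 (g : G) : g = 1 := by_contra fun hg => htf g hg (isOfFinOrder_of_finite g)
    exact .inl ⟨fun a b => (h1 a).trans (h1 b).symm⟩
  · have := isCyclic_of_torsionFree_of_finiteIndex htf C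
    exact .inr ⟨intCyclicMulEquiv.symm⟩
end

section
/- The outer automorphism group of a virtually cyclic group is finite. -/
/-!
A finitely generated group has only finitely many subgroups of a given finite index, so the
intersection of all subgroups of the index of a cyclic subgroup `C` is a characteristic cyclic
subgroup `K` of finite index. Restricting automorphisms to `K` and to `G ⧸ K` (both have finite
automorphism groups) shows that the stability group `N` of `1 ≤ K ≤ G` has finite index in
`Aut G`. For `φ ∈ N` the map `g ↦ g⁻¹ φ g` is a `K`-valued cocycle of `G ⧸ K`; averaging it over
coset representatives shows that `φ ^ [G : K]` is inner. Moreover `N` is abelian and embeds in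
`(G ⧸ K) → K`, so it is finitely generated, and a finitely generated abelian group modulo a
subgroup containing all `m`-th powers is finite.
-/

section

open Subgroup
open scoped IsMulCommutative

variable {G : Type*} [Group G]

instance Group.FG.finite_monoidHom [Group.FG G] {F : Type*} [Group F] [Finite F] :
    Finite (G →* F) := by
  obtain ⟨S, hS, hSfin⟩ := Group.fg_iff.mp ‹Group.FG G›
  have := hSfin.to_subtype
  exact Finite.of_injective (fun f : G →* F => fun s : S => f s) fun f f' h =>
    MonoidHom.eq_of_eqOn_dense hS fun s hs => congrFun h ⟨s, hs⟩

theorem Group.fg_of_finiteIndex (H : Subgroup G) [H.FiniteIndex] (hH : H.FG) : Group.FG G := by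
  obtain ⟨S, hS⟩ := hH
  let T : Set G := S ∪ Set.range fun q : G ⧸ H => q.out
  refine Group.fg_iff.mpr
    ⟨T, eq_top_iff.mpr fun g _ => ?_, S.finite_toSet.union (Set.finite_range _)⟩
  obtain ⟨h, hh⟩ := QuotientGroup.mk_out_eq_mul H g
  have hout : (g : G ⧸ H).out ∈ closure T := subset_closure (Or.inr ⟨_, rfl⟩)
  have hH : H ≤ closure T := hS ▸ closure_mono Set.subset_union_left
  simpa [hh] using mul_mem hout (inv_mem (hH h.2))

instance IsCyclic.fg (K : Type*) [Group K] [IsCyclic K] : Group.FG K := by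
  obtain ⟨g, hg⟩ := isCyclic_iff_exists_zpowers_eq_top.mp ‹IsCyclic K›
  exact Group.fg_iff.mpr ⟨{g}, by rw [← zpowers_eq_closure, hg], Set.finite_singleton g⟩

instance IsCyclic.finite_mulAut (K : Type*) [Group K] [IsCyclic K] : Finite (MulAut K) :=
  .of_equiv _ (IsCyclic.mulAutMulEquiv K).symm.toEquiv

theorem Subgroup.fg_of_commGroup {A : Type*} [CommGroup A] [Group.FG A] (H : Subgroup A) :
    H.FG := by
  have : Module.Finite ℤ (Additive A) := Module.Finite.iff_addGroup_fg.mpr inferInstance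
  rw [fg_iff_add_fg, ← AddSubgroup.toIntSubmodule_toAddSubgroup H.toAddSubgroup,
    ← Submodule.fg_iff_addSubgroup_fg]
  exact IsNoetherian.noetherian _

def MulAut.quotient (K : Subgroup G) [K.Characteristic] : MulAut G →* MulAut (G ⧸ K) where
  toFun φ := QuotientGroup.congr K K φ (characteristic_iff_map_eq.mp ‹_› φ)
  map_one' := by ext ⟨g⟩; rfl
  map_mul' _ _ := by ext ⟨g⟩; rfl

namespace Subgroup

theorem finite_setOf_index_eq [Group.FG G] {n : ℕ} (hn : n ≠ 0) :
    {H : Subgroup G | H.index = n}.Finite := by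
  refine (Set.finite_range fun p : (G →* Equiv.Perm (Fin n)) × Fin n =>
    (MulAction.stabilizer _ p.2).comap p.1).subset fun H (hH : H.index = n) => ?_
  have : H.FiniteIndex := ⟨hH ▸ hn⟩
  obtain ⟨e⟩ : Nonempty (G ⧸ H ≃ Fin n) := by
    rw [← hH, index_eq_card]; exact ⟨Finite.equivFin _⟩
  -- `H` is the stabilizer of the coset `H` in the permutation action of `G` on `G ⧸ H`
  refine ⟨(e.permCongrHom.toMonoidHom.comp (MulAction.toPermHom G (G ⧸ H)), e (1 : G)), ?_⟩
  ext g
  simp [MulAction.mem_stabilizer_iff, Equiv.permCongr_apply, QuotientGroup.eq]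

theorem exists_characteristic_le [Group.FG G] (C : Subgroup G) [C.FiniteIndex] :
    ∃ K : Subgroup G, K.Characteristic ∧ K.FiniteIndex ∧ K ≤ C := by
  set S := {H : Subgroup G | H.index = C.index}
  have hS : S.Finite := finite_setOf_index_eq FiniteIndex.index_ne_zero
  refine ⟨sInf S, characteristic_iff_le_comap.mpr fun φ x hx => ?_, ?_, sInf_le rfl⟩
  · rw [mem_sInf] at hx
    rw [mem_comap, mem_sInf]
    exact fun H hH =>
      hx (H.comap φ.toMonoidHom) ((H.index_comap_of_surjective φ.surjective).trans hH)
  · have := hS.to_subtype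
    rw [sInf_eq_iInf']
    exact finiteIndex_iInf fun H => ⟨H.2 ▸ FiniteIndex.index_ne_zero⟩

/-- The stability group of the series `1 ≤ K ≤ G`. -/
def stabilityGroup (K : Subgroup G) : Subgroup (MulAut G) where
  carrier := {φ | (∀ k ∈ K, φ k = k) ∧ ∀ g, g⁻¹ * φ g ∈ K}
  one_mem' := ⟨fun _ _ => rfl, fun g => by simp [K.one_mem]⟩
  mul_mem' {φ ψ} hφ hψ := by
    refine ⟨fun k hk => by simp [hψ.1 k hk, hφ.1 k hk], fun g => ?_⟩
    have : φ (ψ g) = φ g * (g⁻¹ * ψ g) := by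
      rw [← hφ.1 _ (hψ.2 g), ← map_mul, mul_inv_cancel_left]
    simpa [this, mul_assoc] using mul_mem (hφ.2 g) (hψ.2 g)
  inv_mem' {φ} hφ := by
    refine ⟨fun k hk => by simp [MulEquiv.symm_apply_eq, hφ.1 k hk], fun g => ?_⟩
    simpa using inv_mem (hφ.2 (φ⁻¹ g))

variable {K : Subgroup G} {φ ψ : MulAut G}

theorem apply_mul_of_mem_stabilityGroup (hφ : φ ∈ stabilityGroup K) (g : G) {k : G}
    (hk : k ∈ K) : φ (g * k) = φ g * k := by
  rw [map_mul, hφ.1 k hk]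

theorem mul_apply_of_mem_stabilityGroup (hφ : φ ∈ stabilityGroup K) (hψ : ψ ∈ stabilityGroup K)
    (g : G) : (φ * ψ) g = φ g * (g⁻¹ * ψ g) := by
  conv_lhs => rw [MulAut.mul_apply, ← mul_inv_cancel_left g (ψ g)]
  exact apply_mul_of_mem_stabilityGroup hφ g (hψ.2 g)

theorem pow_apply_of_mem_stabilityGroup (hφ : φ ∈ stabilityGroup K) (n : ℕ) (g : G) :
    (φ ^ n) g = g * (g⁻¹ * φ g) ^ n := by
  induction n with
  | zero => simp
  | succ n ih =>
    rw [pow_succ', MulAut.mul_apply, ih, apply_mul_of_mem_stabilityGroup hφ _ (pow_mem (hφ.2 g) n),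
      pow_succ', ← mul_assoc g, mul_inv_cancel_left]

theorem commute_of_mem_stabilityGroup [IsMulCommutative K] (hφ : φ ∈ stabilityGroup K)
    (hψ : ψ ∈ stabilityGroup K) : φ * ψ = ψ * φ := by
  ext g
  rw [mul_apply_of_mem_stabilityGroup hφ hψ, mul_apply_of_mem_stabilityGroup hψ hφ]
  calc φ g * (g⁻¹ * ψ g) = g * ((g⁻¹ * φ g) * (g⁻¹ * ψ g)) := by group
    _ = g * ((g⁻¹ * ψ g) * (g⁻¹ * φ g)) := by rw [setLike_mul_comm (hφ.2 g) (hψ.2 g)]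
    _ = ψ g * (g⁻¹ * φ g) := by group

variable (K) in
noncomputable def stabilityGroupToPi : stabilityGroup K →* (G ⧸ K → K) where
  toFun φ q := ⟨q.out⁻¹ * φ.1 q.out, φ.2.2 _⟩
  map_one' := by ext; simp
  map_mul' φ ψ := by
    ext q
    simp [mul_apply_of_mem_stabilityGroup φ.2 ψ.2, mul_assoc]

theorem stabilityGroupToPi_injective : Function.Injective (stabilityGroupToPi K) := by
  intro φ ψ h
  ext g
  obtain ⟨k, hk⟩ := QuotientGroup.mk_out_eq_mul K g
  have hφ := apply_mul_of_mem_stabilityGroup φ.2 (g : G ⧸ K).out (inv_mem k.2)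
  have hψ := apply_mul_of_mem_stabilityGroup ψ.2 (g : G ⧸ K).out (inv_mem k.2)
  have hout := congrArg Subtype.val (congrFun h g)
  simp only [stabilityGroupToPi, MonoidHom.coe_mk, OneHom.coe_mk, mul_right_inj] at hout
  rw [hk, mul_inv_cancel_right] at hφ hψ
  rw [hφ, hψ, ← hk, hout]

theorem stabilityGroup_fg [IsMulCommutative K] [Group.FG K] [K.FiniteIndex] :
    (stabilityGroup K).FG := by
  have := (Group.fg_iff_subgroup_fg _).mpr ((stabilityGroupToPi K).range.fg_of_commGroup)
  exact (Group.fg_iff_subgroup_fg _).mp <| Group.fg_of_surjective (f := MulEquiv.toMonoidHom _)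
    (MonoidHom.ofInjective stabilityGroupToPi_injective).symm.surjective

theorem pow_index_mem_range_conj [K.Normal] [IsMulCommutative K] [K.FiniteIndex]
    (hφ : φ ∈ stabilityGroup K) : φ ^ K.index ∈ (MulAut.conj : G →* MulAut G).range := by
  have := Fintype.ofFinite (G ⧸ K)
  let c : G → K := fun g => ⟨g⁻¹ * φ g, hφ.2 g⟩
  have hcoc : ∀ g h : G, c (g * h) = (MulAut.conjNormal (H := K) h)⁻¹ (c g) * c h := by
    intro g h
    ext
    simp only [c, MulAut.conjNormal_inv_apply, Subgroup.coe_mul, map_mul]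
    group
  have hcoset : ∀ g h : G, (g : G ⧸ K) = h → c g = c h := by
    intro g h hgh
    obtain ⟨k, rfl⟩ : ∃ k : K, h = g * k := ⟨⟨g⁻¹ * h, QuotientGroup.eq.mp hgh⟩, by simp⟩
    have hk : c k = 1 := Subtype.ext (by simp [c, hφ.1 k k.2])
    rw [hcoc, hk, mul_one]
    ext
    rw [MulAut.conjNormal_inv_apply, mul_assoc, setLike_mul_comm (c g).2 k.2, inv_mul_cancel_left]
  -- Summing the cocycle identity over coset representatives exhibits `c ^ [G : K]` as the
  -- coboundary of `a`.
  let a : K := ∏ q : G ⧸ K, c q.out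
  have key : ∀ g : G, a = (MulAut.conjNormal (H := K) g)⁻¹ a * c g ^ K.index := by
    intro g
    calc a = ∏ q : G ⧸ K, c (q * g).out :=
          (Fintype.prod_equiv (Equiv.mulRight (g : G ⧸ K)) _ _ fun _ => rfl).symm
      _ = ∏ q : G ⧸ K, c (q.out * g) :=
          Finset.prod_congr rfl fun q _ => hcoset _ _ (by simp)
      _ = (MulAut.conjNormal (H := K) g)⁻¹ a * c g ^ K.index := by
          simp only [hcoc, Finset.prod_mul_distrib, map_prod, Finset.prod_const, Finset.card_univ,
            index_eq_card, Nat.card_eq_fintype_card, a]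
  refine ⟨a⁻¹, MulEquiv.ext fun g => ?_⟩
  have hg := congrArg Subtype.val (key g)
  simp only [MulAut.conjNormal_inv_apply, Subgroup.coe_mul, SubgroupClass.coe_pow, c] at hg
  rw [MulAut.conj_apply, pow_apply_of_mem_stabilityGroup hφ, inv_inv,
    eq_inv_mul_of_mul_eq hg.symm]
  group

theorem finiteIndex_stabilityGroup [K.Characteristic] [Finite (MulAut K)] [K.FiniteIndex] :
    (stabilityGroup K).FiniteIndex := by
  refine finiteIndex_of_le (H := ((MulAut.characteristic K).prod (MulAut.quotient K)).ker)
    fun φ hφ => ?_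
  rw [MonoidHom.mem_ker, MonoidHom.prod_apply, Prod.mk_eq_one] at hφ
  refine ⟨fun k hk => by simpa using congrArg Subtype.val (DFunLike.congr_fun hφ.1 ⟨k, hk⟩),
    fun g => QuotientGroup.eq.mp (DFunLike.congr_fun hφ.2 (g : G ⧸ K)).symm⟩

theorem finiteIndex_of_pow_mem {M : Type*} [Group M] {R N : Subgroup M} [N.FiniteIndex]
    [IsMulCommutative N] (hN : N.FG) {m : ℕ} (hm : m ≠ 0) (h : ∀ x ∈ N, x ^ m ∈ R) :
    R.FiniteIndex := by
  have := (Group.fg_iff_subgroup_fg N).mpr hN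
  have := finiteIndex_range_powMonoidHom_of_fg N hm
  have : (R.subgroupOf N).FiniteIndex := finiteIndex_of_le (H := (powMonoidHom m).range) <| by
    rintro _ ⟨x, rfl⟩
    exact h x x.2
  have : (R ⊓ N).FiniteIndex := ⟨by
    rw [← relIndex_mul_index inf_le_right, inf_relIndex_right]
    exact mul_ne_zero FiniteIndex.index_ne_zero FiniteIndex.index_ne_zero⟩
  exact finiteIndex_of_le (inf_le_left : R ⊓ N ≤ R)

theorem finiteIndex_range_conj (K : Subgroup G) [K.Characteristic] [IsCyclic K] [K.FiniteIndex] :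
    (MulAut.conj : G →* MulAut G).range.FiniteIndex :=
  have : IsMulCommutative (stabilityGroup K) := .of_comm fun φ ψ =>
    Subtype.ext (commute_of_mem_stabilityGroup φ.2 ψ.2)
  have := finiteIndex_stabilityGroup (K := K)
  finiteIndex_of_pow_mem (N := stabilityGroup K) stabilityGroup_fg FiniteIndex.index_ne_zero
    fun _ => pow_index_mem_range_conj

end Subgroup

end

/-- The outer automorphism group `Aut(G)/Inn(G)` of a virtually cyclic group is finite. -/
theorem stmt7 {G : Type*} [Group G]
    (hvc : ∃ C : Subgroup G, IsCyclic C ∧ C.FiniteIndex) :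
    Finite (MulAut G ⧸ (MulAut.conj : G →* MulAut G).range) := by
  obtain ⟨C, hC, hCfi⟩ := hvc
  have : Group.FG G := Group.fg_of_finiteIndex C ((Group.fg_iff_subgroup_fg C).mp inferInstance)
  obtain ⟨K, hK, hKfi, hKC⟩ := C.exists_characteristic_le
  have : IsCyclic K := Subgroup.isCyclic_of_le hKC
  have := Subgroup.finiteIndex_range_conj K
  infer_instance
end

section
/- Let G = A * B be a free product with A and B nontrivial, and let a ∈ A. The automorphism φ_a of G determined by φ_a(x) = a x a⁻¹ for x ∈ A and φ_a(y) = y for y ∈ B is an inner automorphism of G if and only if a lies in the center of A. -/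
/-!
If `φ_a` is conjugation by `g`, then `g` commutes with `B`. In a free product the centralizer of a
nontrivial factor lies in that factor (compare the first letters of the reduced words of
`g * b` and `b * g`), so `g ∈ B`. Projecting `A ∗ B → A` kills `g`, and the relation
`a x a⁻¹ = g x g⁻¹` becomes `a x a⁻¹ = x` for all `x ∈ A`.
-/

/-- The automorphism of `A * B` which is conjugation by `a` on `A` and the identity on `B`. -/
def partialConj {A B : Type*} [Group A] [Group B] (a : A) :
    Monoid.Coprod A B →* Monoid.Coprod A B :=
  Monoid.Coprod.lift
    ((Monoid.Coprod.inl : A →* Monoid.Coprod A B).comp (MulAut.conj a).toMonoidHom)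
    (Monoid.Coprod.inr : B →* Monoid.Coprod A B)

namespace Monoid.CoprodI.Word

variable {ι : Type*} {G : ι → Type*} [∀ i, Group (G i)] [DecidableEq ι]
  [∀ i, DecidableEq (G i)]

theorem equiv_apply (x : CoprodI G) : equiv x = x • empty := rfl

@[simp]
theorem prod_equiv (x : CoprodI G) : (equiv x).prod = x := equiv.symm_apply_apply x

theorem equiv_mul (x y : CoprodI G) : equiv (x * y) = x • equiv y := by
  simp only [equiv_apply, mul_smul]

theorem fstIdx_of_smul {i : ι} {m : G i} (hm : m ≠ 1) {w : Word G} (hw : fstIdx w ≠ some i) :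
    fstIdx (of m • w) = some i := by
  rw [← cons_eq_smul (h1 := hw) (h2 := hm), fstIdx_cons]

theorem fstIdx_equiv_of_ne {i j : ι} (hij : i ≠ j) (m : G i) :
    fstIdx (equiv (of m)) ≠ some j := by
  by_cases hm : m = 1
  · rw [hm, map_one, equiv_apply, one_smul]
    simp [fstIdx, empty]
  · rw [equiv_apply, fstIdx_of_smul hm (by simp [fstIdx, empty])]
    exact fun h => hij (Option.some_injective _ h)

/-- Right multiplication by a letter of `G i` only touches the last syllable, so it cannot change
the first one unless the word is a single `i`-syllable. -/
theorem fstIdx_equiv_mul_of {i : ι} (m : G i) {x : CoprodI G}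
    (hx : x ∉ (of : G i →* CoprodI G).range) :
    fstIdx (equiv (x * of m)) = fstIdx (equiv x) := by
  suffices ∀ w : Word G, w.prod ∉ (of : G i →* CoprodI G).range →
      fstIdx (equiv (w.prod * of m)) = fstIdx w by
    simpa using this (equiv x) (by rwa [prod_equiv])
  intro w
  induction w using consRecOn with
  | empty => exact fun h => absurd ⟨1, map_one _⟩ h
  | cons j g w hw hg ih =>
    intro hgw
    rw [prod_cons, mul_assoc, equiv_mul, fstIdx_cons, fstIdx_of_smul hg]
    by_cases hw' : w.prod ∈ (of : G i →* CoprodI G).range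
    · obtain ⟨n, hn⟩ := hw'
      have hij : i ≠ j := by
        rintro rfl
        exact hgw ⟨g * n, by rw [map_mul, hn, prod_cons]⟩
      rw [← hn, ← map_mul]
      exact fstIdx_equiv_of_ne hij _
    · rw [ih hw']
      exact hw

end Monoid.CoprodI.Word

namespace Monoid.CoprodI

variable {ι : Type*} {G : ι → Type*} [∀ i, Group (G i)]

open Word in
theorem centralizer_range_of_le {i : ι} [Nontrivial (G i)] :
    Subgroup.centralizer (of : G i →* CoprodI G).range ≤ (of : G i →* CoprodI G).range := by
  classical
  intro u hu
  by_contra hu_of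
  have hcomm : ∀ m : G i, of m * u = u * of m :=
    fun m => Subgroup.mem_centralizer_iff.1 hu _ ⟨m, rfl⟩
  by_cases hfst : fstIdx (equiv u) = some i
  · set p := equivPair i (equiv u)
    have h_left : fstIdx (equiv (of p.head⁻¹ * u)) = fstIdx p.tail := by
      rw [equiv_mul, equivPair_tail_eq_inv_smul, map_inv]
    rw [hcomm, fstIdx_equiv_mul_of _ hu_of, hfst] at h_left
    exact p.fstIdx_ne h_left.symm
  · obtain ⟨m, hm⟩ := exists_ne (1 : G i)
    have h_left := fstIdx_of_smul hm hfst
    rw [← equiv_mul, hcomm, fstIdx_equiv_mul_of m hu_of] at h_left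
    exact hfst h_left

end Monoid.CoprodI

namespace Monoid.Coprod

universe u v

variable {A : Type u} {B : Type v} [Group A] [Group B]

/-- `A` and `B` may live in different universes, so they are lifted to a common one to view
`A ∗ B` inside the indexed free product, where reduced words are available. -/
abbrev boolFamily (A : Type u) (B : Type v) : Bool → Type (max u v) :=
  fun b => cond b (ULift.{v} A) (ULift.{u} B)

instance : ∀ b, Group (boolFamily A B b)
  | true => inferInstanceAs (Group (ULift A))
  | false => inferInstanceAs (Group (ULift B))

instance [Nontrivial B] : Nontrivial (boolFamily A B false) :=
  inferInstanceAs (Nontrivial (ULift B))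

def toCoprodI : A ∗ B →* CoprodI (boolFamily A B) :=
  lift ((CoprodI.of (i := true)).comp MulEquiv.ulift.symm.toMonoidHom)
    ((CoprodI.of (i := false)).comp MulEquiv.ulift.symm.toMonoidHom)

def ofCoprodI : CoprodI (boolFamily A B) →* A ∗ B :=
  CoprodI.lift fun
    | true => inl.comp MulEquiv.ulift.toMonoidHom
    | false => inr.comp MulEquiv.ulift.toMonoidHom

theorem ofCoprodI_comp_toCoprodI : ofCoprodI.comp toCoprodI = MonoidHom.id (A ∗ B) :=
  hom_ext rfl rfl

theorem toCoprodI_injective : Function.Injective (toCoprodI (A := A) (B := B)) :=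
  Function.LeftInverse.injective (g := ofCoprodI) (DFunLike.congr_fun ofCoprodI_comp_toCoprodI)

theorem centralizer_range_inr_le [Nontrivial B] :
    Subgroup.centralizer (inr : B →* A ∗ B).range ≤ (inr : B →* A ∗ B).range := by
  intro u hu
  have hu' : toCoprodI u ∈ Subgroup.centralizer
      (CoprodI.of : boolFamily A B false →* CoprodI (boolFamily A B)).range := by
    rintro _ ⟨y, rfl⟩
    have := congrArg toCoprodI (Subgroup.mem_centralizer_iff.1 hu (inr y.down) ⟨y.down, rfl⟩)
    rwa [map_mul, map_mul] at this
  obtain ⟨y, hy⟩ := CoprodI.centralizer_range_of_le hu'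
  exact ⟨y.down, toCoprodI_injective hy⟩

end Monoid.Coprod

section

variable {A B : Type*} [Group A] [Group B]

@[simp]
theorem partialConj_inl (a x : A) :
    partialConj (B := B) a (Monoid.Coprod.inl x) = Monoid.Coprod.inl (a * x * a⁻¹) := rfl

@[simp]
theorem partialConj_inr (a : A) (y : B) :
    partialConj a (Monoid.Coprod.inr y) = Monoid.Coprod.inr y := rfl

theorem partialConj_eq_id_of_mem_center {a : A} (ha : a ∈ Subgroup.center A) :
    partialConj (B := B) a = MonoidHom.id _ := by
  refine Monoid.Coprod.hom_ext (MonoidHom.ext fun x => ?_) rfl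
  simp [(Subgroup.mem_center_iff.1 ha x).symm]

end

theorem stmt14_general {A B : Type*} [Group A] [Group B] [Nontrivial B] (a : A) :
    (∃ g : Monoid.Coprod A B, ∀ x : Monoid.Coprod A B, partialConj (B := B) a x = g * x * g⁻¹)
      ↔ a ∈ Subgroup.center A := by
  constructor
  · rintro ⟨g, hg⟩
    have hg_centralizes :
        g ∈ Subgroup.centralizer (Monoid.Coprod.inr : B →* Monoid.Coprod A B).range := by
      rintro _ ⟨y, rfl⟩
      have := hg (Monoid.Coprod.inr y)
      rwa [partialConj_inr, eq_mul_inv_iff_mul_eq] at this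
    obtain ⟨c, rfl⟩ := Monoid.Coprod.centralizer_range_inr_le hg_centralizes
    refine Subgroup.mem_center_iff.2 fun x => ?_
    have := congrArg Monoid.Coprod.fst (hg (Monoid.Coprod.inl x))
    simp only [partialConj_inl, map_mul, map_inv, Monoid.Coprod.fst_apply_inl,
      Monoid.Coprod.fst_apply_inr, one_mul, mul_one, inv_one] at this
    exact (mul_inv_eq_iff_eq_mul.1 this).symm
  · intro ha
    exact ⟨1, fun x => by simp [partialConj_eq_id_of_mem_center ha]⟩

/-- In a free product `A * B` of nontrivial groups, the automorphism which is conjugation by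
`a ∈ A` on `A` and the identity on `B` is inner if and only if `a` is central in `A`. -/
theorem stmt14 {A B : Type*} [Group A] [Group B] [Nontrivial A] [Nontrivial B] (a : A) :
    (∃ g : Monoid.Coprod A B, ∀ x : Monoid.Coprod A B, partialConj (B := B) a x = g * x * g⁻¹)
      ↔ a ∈ Subgroup.center A :=
  stmt14_general a
end

section
/- Let A be a nontrivial group and G = A * ℤ the free product of A with an infinite cyclic group generated by t. For a ∈ A let ψ_a ∈ Aut(G) be the automorphism with ψ_a(x) = x for x ∈ A and ψ_a(t) = a t. Then ψ_a is inner if and only if a = 1; consequently a ↦ [ψ_a] induces an injection of A (as a set) into Out(G), and Out(A * ℤ) is infinite whenever A is infinite. -/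
/-!
Let `fst : A ∗ ℤ →* A` be the retraction killing `t`. If `ψ_a = c_g ∘ ψ_b`, then applying `fst`
to this identity on `A` shows that `fst g` is central in `A`, and applying it at `t` gives
`a = fst g * b * (fst g)⁻¹ = b`.
-/

/-- The endomorphism of `A * ℤ` which is the identity on `A` and sends the generator `t`
of `ℤ` to `a * t`. -/
def twistByA {A : Type*} [Group A] (a : A) :
    Monoid.Coprod A (Multiplicative ℤ) →* Monoid.Coprod A (Multiplicative ℤ) :=
  Monoid.Coprod.lift (Monoid.Coprod.inl : A →* Monoid.Coprod A (Multiplicative ℤ))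
    (zpowersHom (Monoid.Coprod A (Multiplicative ℤ))
      (Monoid.Coprod.inl a * Monoid.Coprod.inr (Multiplicative.ofAdd 1)))

open Monoid.Coprod

section

variable {A : Type*} [Group A]

@[simp]
lemma twistByA_inl (a x : A) : twistByA a (inl x) = inl x :=
  lift_apply_inl _ _ x

@[simp]
lemma twistByA_inr_ofAdd_one (a : A) :
    twistByA a (inr (Multiplicative.ofAdd 1)) = inl a * inr (Multiplicative.ofAdd 1) := by
  rw [twistByA, lift_apply_inr, zpowersHom_apply, toAdd_ofAdd, zpow_one]

lemma twistByA_comp_twistByA (a b : A) :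
    (twistByA a).comp (twistByA b) = twistByA (b * a) := by
  ext <;> simp [← mul_assoc]

lemma twistByA_one : twistByA (1 : A) = MonoidHom.id _ := by
  ext <;> simp

def twistByAEquiv (a : A) : MulAut (A ∗ Multiplicative ℤ) :=
  (twistByA a).toMulEquiv (twistByA a⁻¹)
    (by rw [twistByA_comp_twistByA, mul_inv_cancel, twistByA_one])
    (by rw [twistByA_comp_twistByA, inv_mul_cancel, twistByA_one])

lemma eq_of_twistByA_eq_conj {a b : A} {g : A ∗ Multiplicative ℤ}
    (h : ∀ x, twistByA a x = g * twistByA b x * g⁻¹) : a = b := by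
  have hcentral : ∀ c : A, fst g * c * (fst g)⁻¹ = c := fun c => by
    simpa using (congrArg fst (h (inl c))).symm
  calc a = fst (twistByA a (inr (Multiplicative.ofAdd 1))) := by simp
    _ = fst g * b * (fst g)⁻¹ := by rw [h]; simp
    _ = b := hcentral b

lemma exists_twistByA_eq_conj_iff (a : A) :
    (∃ g : A ∗ Multiplicative ℤ, ∀ x, twistByA a x = g * x * g⁻¹) ↔ a = 1 := by
  constructor
  · rintro ⟨g, hg⟩
    exact eq_of_twistByA_eq_conj (g := g) fun x => by rw [twistByA_one]; exact hg x
  · rintro rfl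
    exact ⟨1, fun x => by simp [twistByA_one]⟩

lemma mk_twistByAEquiv_injective :
    Function.Injective fun a : A =>
      (twistByAEquiv a : MulAut (A ∗ Multiplicative ℤ) ⧸
        (MulAut.conj : A ∗ Multiplicative ℤ →* MulAut (A ∗ Multiplicative ℤ)).range) := by
  intro a b hab
  obtain ⟨g, hg⟩ := QuotientGroup.eq.mp hab
  have hb : twistByAEquiv b = twistByAEquiv a * MulAut.conj g := by rw [hg, mul_inv_cancel_left]
  refine (eq_of_twistByA_eq_conj (g := twistByA a g) fun x => ?_).symm
  calc twistByA b x = twistByA a (g * x * g⁻¹) := DFunLike.congr_fun hb x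
    _ = twistByA a g * twistByA a x * (twistByA a g)⁻¹ := by simp only [map_mul, map_inv]

end

theorem stmt15_general {A : Type*} [Group A] :
    (∀ a : A, (∃ g : Monoid.Coprod A (Multiplicative ℤ),
        ∀ x, twistByA a x = g * x * g⁻¹) ↔ a = 1) ∧
    (∀ a b : A, (∃ g : Monoid.Coprod A (Multiplicative ℤ),
        ∀ x, twistByA a x = g * twistByA b x * g⁻¹) → a = b) ∧
    (Infinite A →
      Infinite (MulAut (Monoid.Coprod A (Multiplicative ℤ)) ⧸
        (MulAut.conj : Monoid.Coprod A (Multiplicative ℤ) →*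
          MulAut (Monoid.Coprod A (Multiplicative ℤ))).range)) :=
  ⟨exists_twistByA_eq_conj_iff, fun _ _ ⟨_, hg⟩ => eq_of_twistByA_eq_conj hg,
    fun _ => Infinite.of_injective _ mk_twistByAEquiv_injective⟩

/-- Let `G = A * ℤ` with `A` nontrivial and let `ψ_a` be the automorphism which is the
identity on `A` and sends the generator `t` to `a t`. Then `ψ_a` is inner iff `a = 1`;
the map `a ↦ [ψ_a]` is injective into `Out(G)`; and `Out(A * ℤ)` is infinite whenever `A`
is infinite. -/
theorem stmt15 {A : Type*} [Group A] [Nontrivial A] :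
    (∀ a : A, (∃ g : Monoid.Coprod A (Multiplicative ℤ),
        ∀ x, twistByA a x = g * x * g⁻¹) ↔ a = 1) ∧
    (∀ a b : A, (∃ g : Monoid.Coprod A (Multiplicative ℤ),
        ∀ x, twistByA a x = g * twistByA b x * g⁻¹) → a = b) ∧
    (Infinite A →
      Infinite (MulAut (Monoid.Coprod A (Multiplicative ℤ)) ⧸
        (MulAut.conj : Monoid.Coprod A (Multiplicative ℤ) →*
          MulAut (Monoid.Coprod A (Multiplicative ℤ))).range)) :=
  stmt15_general
end

section
/- If a finitely generated torsion-free group G decomposes as a nontrivial free product G = A * B (with A and B nontrivial), then the outer automorphism group Out(G) is infinite. -/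
/-!
If `A ⧸ Z(A)` is infinite, the twists (conjugation by `c` on `A`, identity on `B`) embed it into
`Out (A ∗ B)`: a twist equal to conjugation by `p` makes `p` centralize `B`, which forces the
image of `p` in `A` to be trivial, and then `c` is central. Otherwise, by Schur's theorem both
torsion-free factors are abelian, and `A ≅ ℤⁿ`. For `n ≥ 2` a transvection of `A`, and for
`n = 1` the automorphism `x ↦ x b` of `ℤ ∗ B`, has powers acting nontrivially on the abelian
quotient `A` (resp. `B`) of `A ∗ B`, on which inner automorphisms act trivially.
-/

open Monoid

instance MulAut.normal_range_conj (G : Type*) [Group G] :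
    (MulAut.conj : G →* MulAut G).range.Normal where
  conj_mem := by
    rintro _ ⟨g, rfl⟩ ψ
    exact ⟨ψ g, by ext x; simp [MulAut.mul_apply]⟩

abbrev Out (G : Type*) [Group G] := MulAut G ⧸ (MulAut.conj : G →* MulAut G).range

section Out

variable {G H C : Type*} [Group G] [Group H] [CommGroup C]

theorem MulAut.congr_conj (ϕ : G ≃* H) (g : G) :
    MulAut.congr ϕ (MulAut.conj g) = MulAut.conj (ϕ g) := by
  ext x; simp

def Out.congr (ϕ : G ≃* H) : Out G ≃* Out H :=
  QuotientGroup.congr _ _ (MulAut.congr ϕ) <| by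
    have hcomp : (MulAut.congr ϕ : MulAut G →* MulAut H).comp MulAut.conj =
        MulAut.conj.comp (ϕ : G →* H) :=
      MonoidHom.ext (MulAut.congr_conj ϕ)
    rw [MonoidHom.map_range, hcomp, MonoidHom.range_comp,
      (ϕ : G →* H).range_eq_top.mpr ϕ.surjective, MonoidHom.range_eq_map]

theorem Out.infinite_of_forall_pow_notMem {ψ : MulAut G}
    (h : ∀ n : ℕ, 0 < n → ψ ^ n ∉ (MulAut.conj : G →* MulAut G).range) : Infinite (Out G) := by
  rw [← not_finite_iff_infinite]
  intro hfin
  obtain ⟨n, hn, hpow⟩ := isOfFinOrder_iff_pow_eq_one.mp (isOfFinOrder_of_finite (ψ : Out G))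
  rw [← QuotientGroup.mk_pow, QuotientGroup.eq_one_iff] at hpow
  exact h n hn hpow

theorem Out.infinite_of_comap_le {K : Type*} [Group K] (φ : K →* MulAut G) {N : Subgroup K}
    (hN : (MulAut.conj : G →* MulAut G).range.comap φ ≤ N) (hKN : Infinite (K ⧸ N)) :
    Infinite (Out G) := by
  rw [← Subgroup.index_eq_zero_iff_infinite] at hKN ⊢
  have hcomap := zero_dvd_iff.mp (hKN ▸ Subgroup.index_dvd_of_le hN)
  rw [Subgroup.index_comap] at hcomap
  exact zero_dvd_iff.mp (hcomap ▸ Subgroup.relIndex_dvd_index_of_normal _ _)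

theorem MonoidHom.apply_mulAut_eq_of_mem_range_conj (π : G →* C) {ψ : MulAut G}
    (hψ : ψ ∈ (MulAut.conj : G →* MulAut G).range) (x : G) : π (ψ x) = π x := by
  obtain ⟨p, rfl⟩ := hψ
  simp

theorem Out.infinite_of_map_pow_apply_ne (π : G →* C) (ψ : MulAut G) (x : G)
    (h : ∀ n : ℕ, 0 < n → π ((ψ ^ n) x) ≠ π x) : Infinite (Out G) :=
  Out.infinite_of_forall_pow_notMem fun n hn hmem =>
    h n hn (π.apply_mulAut_eq_of_mem_range_conj hmem x)

end Out

section Schur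

open scoped commutatorElement

variable {G : Type*} [Group G]

theorem commutatorElement_mul_mul_of_mem_center (g h : G) {z w : G}
    (hz : z ∈ Subgroup.center G) (hw : w ∈ Subgroup.center G) : ⁅g * z, h * w⁆ = ⁅g, h⁆ := by
  have hz' : Commute z (h * w) := (Subgroup.mem_center_iff.mp hz _).symm
  have hw' : Commute g w := Subgroup.mem_center_iff.mp hw g
  rw [commutatorElement_mul_left_eq_conj_mul, hz'.commutator_eq,
    commutatorElement_mul_right_eq_mul_conj, hw'.commutator_eq]
  group

theorem commutatorElement_out_eq (g h : G) :
    ⁅(g : G ⧸ Subgroup.center G).out, (h : G ⧸ Subgroup.center G).out⁆ = ⁅g, h⁆ := by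
  obtain ⟨z, hz⟩ := QuotientGroup.mk_out_eq_mul (Subgroup.center G) g
  obtain ⟨w, hw⟩ := QuotientGroup.mk_out_eq_mul (Subgroup.center G) h
  rw [hz, hw, commutatorElement_mul_mul_of_mem_center _ _ z.2 w.2]

theorem finite_commutatorSet_of_finite_quotient_center [Finite (G ⧸ Subgroup.center G)] :
    Finite (commutatorSet G) := by
  refine (Set.finite_range fun q : (G ⧸ Subgroup.center G) × (G ⧸ Subgroup.center G) =>
    ⁅q.1.out, q.2.out⁆).subset ?_
  rintro _ ⟨g, h, rfl⟩
  exact ⟨(g, h), commutatorElement_out_eq g h⟩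

theorem isMulCommutative_of_finite_quotient_center (htf : ∀ g : G, g ≠ 1 → ¬IsOfFinOrder g)
    [Finite (G ⧸ Subgroup.center G)] : IsMulCommutative G := by
  have := finite_commutatorSet_of_finite_quotient_center (G := G)
  rw [← commutator_eq_bot_iff, Subgroup.eq_bot_iff_forall]
  intro x hx
  by_contra hx1
  exact htf x hx1 (Submonoid.isOfFinOrder_coe.mpr (isOfFinOrder_of_finite (⟨x, hx⟩ : commutator G)))

end Schur

theorem LinearEquiv.transvection_pow_apply {R V : Type*} [Ring R] [AddCommGroup V] [Module R V]
    {f : Module.Dual R V} {v : V} (h : f v = 0) (n : ℕ) (x : V) :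
    (LinearEquiv.transvection h ^ n) x = x + (n : R) • f x • v := by
  induction n with
  | zero => simp
  | succ n ih =>
    rw [pow_succ', LinearEquiv.mul_apply, ih, LinearEquiv.transvection.apply]
    simp [h, add_smul, add_assoc]

theorem Module.Basis.exists_mulAut_pow_apply_ne {A ι : Type*} [CommGroup A]
    (b : Module.Basis ι ℤ (Additive A)) {i j : ι} (hij : i ≠ j) :
    ∃ (α : MulAut A) (a : A), ∀ n : ℕ, 0 < n → (α ^ n) a ≠ a := by
  have hji : b.coord i (b j) = 0 := by simp [hij.symm]
  let σ := LinearEquiv.transvection hji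
  refine ⟨MulEquiv.toAdditive.symm σ.toAddEquiv, (b i).toMul, fun n hn h => ?_⟩
  have hpow (m : ℕ) (a : A) :
      (MulEquiv.toAdditive.symm σ.toAddEquiv ^ m) a = ((σ ^ m) (.ofMul a)).toMul := by
    induction m generalizing a with
    | zero => rfl
    | succ m ih => rw [pow_succ', MulAut.mul_apply, ih, pow_succ', LinearEquiv.mul_apply]; rfl
  replace h : b i + (n : ℤ) • b.coord i (b i) • b j = b i := by
    rwa [hpow, ofMul_toMul, LinearEquiv.transvection_pow_apply] at h
  rw [b.coord_apply, b.repr_self, Finsupp.single_eq_same, one_smul, add_eq_left] at h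
  simpa [hn.ne'] using congrArg (fun v => b.repr v j) h

namespace Monoid.Coprod

open scoped IsMulCommutative

variable {A B : Type*} [Group A] [Group B]

def mulAutLeft : MulAut A →* MulAut (A ∗ B) where
  toFun α := MulEquiv.coprodCongr α (MulEquiv.refl B)
  map_one' := MulEquiv.toMonoidHom_injective (hom_ext rfl rfl)
  map_mul' _ _ := MulEquiv.toMonoidHom_injective (hom_ext rfl rfl)

@[simp]
theorem mulAutLeft_apply_inl (α : MulAut A) (a : A) :
    mulAutLeft α (inl a : A ∗ B) = inl (α a) := rfl

@[simp]
theorem mulAutLeft_apply_inr (α : MulAut A) (b : B) :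
    mulAutLeft α (inr b : A ∗ B) = inr b := rfl

open scoped Classical in
noncomputable def toWreath : A ∗ B →* B ≀ᵣ A :=
  lift RegularWreathProduct.inl
    { toFun b := ⟨Pi.mulSingle 1 b, 1⟩
      map_one' := by ext <;> simp
      map_mul' b b' := by ext x <;> simp [Pi.mulSingle_mul] }

open scoped Classical in
theorem toWreath_inr (b : B) : toWreath (inr b : A ∗ B) = ⟨Pi.mulSingle 1 b, 1⟩ := rfl

theorem right_toWreath (x : A ∗ B) : (toWreath x).right = fst x := by
  change RegularWreathProduct.rightHom.comp toWreath x = fst x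
  congr 1
  exact hom_ext rfl rfl

/-- In `B ≀ᵣ A` the image of `inr b` is supported at `1`, and conjugating it by an element with
right component `α` moves the support to `α`; so commuting with it forces `α = fst p` to be `1`. -/
theorem fst_eq_one_of_commute_inr {p : A ∗ B} {b : B} (hb : b ≠ 1) (h : Commute p (inr b)) :
    fst p = 1 := by
  classical
  by_contra hp
  rw [← right_toWreath] at hp
  have key := congr_fun (congrArg RegularWreathProduct.left (congrArg toWreath h.eq))
    (toWreath p).right
  simp only [map_mul, toWreath_inr, RegularWreathProduct.mul_left, Pi.mul_apply, inv_mul_cancel,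
    Pi.mulSingle_eq_same, inv_one, one_mul, Pi.mulSingle_eq_of_ne hp] at key
  exact hb (mul_eq_left.mp key)

def twist : A →* MulAut (A ∗ B) := mulAutLeft.comp MulAut.conj

theorem mem_center_of_twist_mem_range_conj [Nontrivial B] {c : A}
    (h : twist c ∈ (MulAut.conj : A ∗ B →* MulAut (A ∗ B)).range) : c ∈ Subgroup.center A := by
  obtain ⟨p, hp⟩ := h
  have hconj (x : A ∗ B) : p * x * p⁻¹ = twist c x := by rw [← hp, MulAut.conj_apply]
  obtain ⟨b, hb⟩ := exists_ne (1 : B)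
  have hp1 : fst p = 1 := fst_eq_one_of_commute_inr hb <| (commute_iff_eq _ _).mpr <| by
    simpa [mul_inv_eq_iff_eq_mul, twist] using hconj (inr b)
  refine Subgroup.mem_center_iff.mpr fun a => ?_
  simpa [hp1, twist, eq_mul_inv_iff_mul_eq] using congrArg fst (hconj (inl a))

theorem infinite_out_of_infinite_quotient_center [Nontrivial B]
    (h : Infinite (A ⧸ Subgroup.center A)) : Infinite (Out (A ∗ B)) :=
  Out.infinite_of_comap_le twist (fun _ => mem_center_of_twist_mem_range_conj) h

theorem infinite_out_of_pow_apply_ne [IsMulCommutative A] (α : MulAut A) (a : A)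
    (h : ∀ n : ℕ, 0 < n → (α ^ n) a ≠ a) : Infinite (Out (A ∗ B)) :=
  Out.infinite_of_map_pow_apply_ne fst (mulAutLeft α) (inl a) fun n hn => by
    simpa [← map_pow] using h n hn

def shear (b : B) : MulAut (Multiplicative ℤ ∗ B) :=
  MonoidHom.toMulEquiv (lift (zpowersHom _ (inl (.ofAdd 1) * inr b)) inr)
    (lift (zpowersHom _ (inl (.ofAdd 1) * inr b⁻¹)) inr)
    (hom_ext (MonoidHom.ext_mint (by simp [mul_assoc])) (MonoidHom.ext fun _ => by simp))
    (hom_ext (MonoidHom.ext_mint (by simp [mul_assoc])) (MonoidHom.ext fun _ => by simp))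

theorem shear_pow_apply_inl (b : B) (n : ℕ) :
    (shear b ^ n) (inl (.ofAdd 1)) = inl (.ofAdd 1) * inr (b ^ n) := by
  induction n with
  | zero => simp
  | succ n ih =>
    rw [pow_succ', MulAut.mul_apply, ih]
    simp [shear, mul_assoc, pow_succ']

theorem infinite_out_int_coprod [IsMulCommutative B] [Nontrivial B]
    (hB : ∀ b : B, b ≠ 1 → ¬IsOfFinOrder b) : Infinite (Out (Multiplicative ℤ ∗ B)) := by
  obtain ⟨b, hb⟩ := exists_ne (1 : B)
  refine Out.infinite_of_map_pow_apply_ne snd (shear b) (inl (.ofAdd 1)) fun n hn hpow => ?_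
  simp only [shear_pow_apply_inl, map_mul, snd_apply_inl, snd_apply_inr, one_mul] at hpow
  exact hB b hb (isOfFinOrder_iff_pow_eq_one.mpr ⟨n, hn, hpow⟩)

theorem infinite_out_of_isMulCommutative [IsMulCommutative A] [IsMulCommutative B] [Group.FG A]
    [Nontrivial A] [Nontrivial B] (hA : ∀ a : A, a ≠ 1 → ¬IsOfFinOrder a)
    (hB : ∀ b : B, b ≠ 1 → ¬IsOfFinOrder b) : Infinite (Out (A ∗ B)) := by
  have : IsMulTorsionFree A := isMulTorsionFree_iff_not_isOfFinOrder.mpr hA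
  have : Module.Finite ℤ (Additive A) := Module.Finite.iff_addGroup_fg.mpr inferInstance
  have hrank : 0 < Module.finrank ℤ (Additive A) := Module.finrank_pos
  obtain hrank | hrank : Module.finrank ℤ (Additive A) = 1 ∨ 2 ≤ Module.finrank ℤ (Additive A) := by
    omega
  · let ζ : A ≃* Multiplicative ℤ := AddEquiv.toMultiplicativeRight
      (LinearEquiv.ofFinrankEq (Additive A) ℤ (hrank.trans (Module.finrank_self ℤ).symm)).toAddEquiv
    exact (Out.congr (MulEquiv.coprodCongr ζ (.refl B))).toEquiv.infinite_iff.mpr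
      (infinite_out_int_coprod hB)
  · obtain ⟨α, a, h⟩ := (Module.finBasis ℤ (Additive A)).exists_mulAut_pow_apply_ne
      (i := ⟨0, by omega⟩) (j := ⟨1, hrank⟩) (by simp)
    exact infinite_out_of_pow_apply_ne α a h

theorem infinite_out [Group.FG A] [Nontrivial A] [Nontrivial B]
    (hA : ∀ a : A, a ≠ 1 → ¬IsOfFinOrder a) (hB : ∀ b : B, b ≠ 1 → ¬IsOfFinOrder b) :
    Infinite (Out (A ∗ B)) := by
  rcases finite_or_infinite (A ⧸ Subgroup.center A) with hZA | hZA
  · rcases finite_or_infinite (B ⧸ Subgroup.center B) with hZB | hZB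
    · have := isMulCommutative_of_finite_quotient_center hA
      have := isMulCommutative_of_finite_quotient_center hB
      exact infinite_out_of_isMulCommutative hA hB
    · exact (Out.congr (MulEquiv.coprodComm A B)).toEquiv.infinite_iff.mpr
        (infinite_out_of_infinite_quotient_center hZB)
  · exact infinite_out_of_infinite_quotient_center hZA

end Monoid.Coprod

theorem Function.Injective.not_isOfFinOrder {H K : Type*} [Group H] [Group K] {f : H →* K}
    (hf : Function.Injective f) (hK : ∀ k : K, k ≠ 1 → ¬IsOfFinOrder k) (h : H) (h1 : h ≠ 1) :
    ¬IsOfFinOrder h := by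
  rw [← hf.isOfFinOrder_iff]
  exact hK (f h) (by rwa [Ne, hf.eq_iff' (map_one f)])

/-- A finitely generated torsion-free group which is a nontrivial free product has infinite
outer automorphism group `Aut(G)/Inn(G)`. -/
theorem stmt18 {G : Type*} [Group G] (hfg : Group.FG G) (htf : ∀ g : G, g ≠ 1 → ¬IsOfFinOrder g)
    {A B : Type*} [Group A] [Group B] [Nontrivial A] [Nontrivial B]
    (e : G ≃* Monoid.Coprod A B) :
    Infinite (MulAut G ⧸ (MulAut.conj : G →* MulAut G).range) := by
  have : Group.FG A := Group.fg_of_surjective (f := Coprod.fst.comp e.toMonoidHom)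
    (Coprod.fst_surjective.comp e.surjective)
  have htfAB : ∀ x : Coprod A B, x ≠ 1 → ¬IsOfFinOrder x :=
    e.symm.injective.not_isOfFinOrder (f := e.symm.toMonoidHom) htf
  exact (Out.congr e).toEquiv.infinite_iff.mpr <| Coprod.infinite_out
    (Coprod.inl_injective.not_isOfFinOrder htfAB) (Coprod.inr_injective.not_isOfFinOrder htfAB)
end
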